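/- Let Σ ∈ ℝ^{2×2} be symmetric positive definite with equal diagonal entries, Σ = [[s, c],[c, s]]. Then Σ⁻¹e₂ = (1/(s+c))·e₂, and consequently, for every A > 0, α, γ_g > 0 and ρ ∈ [0,1], the error region of ML demodulation of BPSK under the GS density coincides exactly with the half-plane: {n ∈ ℝ² : f_M(n + 2A·e₂) > f_M(n)} = {n ∈ ℝ² : n₁ + n₂ < −2A}. -/

import Mathlib

/-!
The all-ones vector `e` is an eigenvector of `Σ = [[s, c], [c, s]]` with eigenvalue `s + c`, which
is positive because `Σ` is positive definite; hence `Σ⁻¹ e = e / (s + c)`. Consequently the shift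
`n ↦ n + 2A e` changes both `‖n‖²` and the Mahalanobis form `nᵀ Σ⁻¹ n` by positive multiples of
the same number `n₁ + n₂ + 2A`. Both components of the GS density are strictly decreasing in
these quantities, so the density increases under the shift exactly when `n₁ + n₂ + 2A < 0`.
-/

open Matrix Real

namespace Matrix

variable {n : Type*} [Fintype n]

theorem inv_mulVec_eq_inv_smul_of_mulVec_eq_smul {K : Type*} [Field K] [DecidableEq n]
    {M : Matrix n n K} (hM : IsUnit M) {v : n → K} {μ : K} (hμ : μ ≠ 0)
    (hv : M *ᵥ v = μ • v) : M⁻¹ *ᵥ v = μ⁻¹ • v := by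
  let := hM.invertible
  exact inv_mulVec_eq_vec (by rw [mulVec_smul, hv, smul_smul, inv_mul_cancel₀ hμ, one_smul])

theorem PosDef.pos_of_mulVec_eq_smul {M : Matrix n n ℝ} (hM : M.PosDef) {v : n → ℝ}
    (hv0 : v ≠ 0) {μ : ℝ} (hv : M *ᵥ v = μ • v) : 0 < μ := by
  have hpos := hM.dotProduct_mulVec_pos hv0
  rw [hv, dotProduct_smul, star_trivial, smul_eq_mul] at hpos
  exact pos_of_mul_pos_left hpos (dotProduct_self_star_pos_iff.mpr hv0).le

theorem IsSymm.dotProduct_mulVec_add_smul {R : Type*} [CommRing R] {M : Matrix n n R}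
    (hM : M.IsSymm) {v : n → R} {μ : R} (hv : M *ᵥ v = μ • v) (x : n → R) (t : R) :
    (x + t • v) ⬝ᵥ (M *ᵥ (x + t • v))
      = x ⬝ᵥ (M *ᵥ x) + μ * t * (2 * (v ⬝ᵥ x) + t * (v ⬝ᵥ v)) := by
  have hvM : v ᵥ* M = μ • v := by rw [← mulVec_transpose, hM.eq, hv]
  simp only [mulVec_add, mulVec_smul, hv, add_dotProduct, dotProduct_add, smul_dotProduct,
    dotProduct_smul, dotProduct_mulVec v, hvM, dotProduct_comm x v, smul_eq_mul]
  ring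

theorem fin_two_symm_mulVec_const_one {R : Type*} [CommRing R] (s c : R) :
    !![s, c; c, s] *ᵥ (fun _ => 1) = (s + c) • fun _ => 1 := by
  funext i
  fin_cases i <;> simp [mulVec, dotProduct, Fin.sum_univ_two, add_comm]

end Matrix

theorem strictAnti_exp_neg_div {κ : ℝ} (hκ : 0 < κ) : StrictAnti fun r : ℝ => exp (-r / κ) :=
  fun _ _ h => exp_lt_exp.mpr (div_lt_div_of_pos_right (neg_lt_neg h) hκ)

theorem strictAntiOn_one_add_div_rpow {α β : ℝ} (hα : 0 < α) (hβ : β < 0) :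
    StrictAntiOn (fun q : ℝ => (1 + q / α) ^ β) (Set.Ici 0) :=
  fun q hq _ _ h =>
    rpow_lt_rpow_of_neg (by have := div_nonneg (Set.mem_Ici.mp hq) hα.le; linarith) (by gcongr) hβ

theorem mixture_lt_mixture_shift_iff {φ ψ : ℝ → ℝ} {S : Set ℝ} (hφ : StrictAnti φ)
    (hψ : StrictAntiOn ψ S) {ρ a b : ℝ} (hρ : ρ ∈ Set.Icc (0 : ℝ) 1) (ha : 0 < a) (hb : 0 < b)
    {x y u v δ : ℝ} (hu : 0 < u) (hv : 0 < v) (hy : y ∈ S) (hyδ : y + v * δ ∈ S) :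
    ρ * a * φ x + (1 - ρ) * b * ψ y < ρ * a * φ (x + u * δ) + (1 - ρ) * b * ψ (y + v * δ)
      ↔ δ < 0 := by
  obtain ⟨hρ0, hρ1⟩ := hρ
  constructor
  · intro hlt
    by_contra! hδ
    have hφle : φ (x + u * δ) ≤ φ x := hφ.antitone (le_add_of_nonneg_right (by positivity))
    have hψle : ψ (y + v * δ) ≤ ψ y :=
      hψ.antitoneOn hy hyδ (le_add_of_nonneg_right (by positivity))
    nlinarith [mul_le_mul_of_nonneg_left hφle (mul_nonneg hρ0 ha.le),
      mul_le_mul_of_nonneg_left hψle (mul_nonneg (sub_nonneg.mpr hρ1) hb.le)]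
  · intro hδ
    have hφlt : φ x < φ (x + u * δ) := hφ (add_lt_of_neg_right x (mul_neg_of_pos_of_neg hu hδ))
    have hψlt : ψ y < ψ (y + v * δ) :=
      hψ hyδ hy (add_lt_of_neg_right y (mul_neg_of_pos_of_neg hv hδ))
    rcases hρ0.eq_or_lt with rfl | hρpos
    · nlinarith
    · nlinarith [mul_lt_mul_of_pos_left hφlt (mul_pos hρpos ha),
        mul_le_mul_of_nonneg_left hψlt.le (mul_nonneg (sub_nonneg.mpr hρ1) hb.le)]

/-- For a symmetric positive definite `Σ = [[s, c],[c, s]] ∈ ℝ^{2×2}` with equal diagonal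
entries, `Σ⁻¹e₂ = (1/(s+c))·e₂`, and consequently the ML BPSK error region under the
GS density (p = 2) is exactly the half-plane `{n : n₁ + n₂ < −2A}`. -/
theorem error_region_exact_p2 (s c : ℝ)
    (hCov : (!![s, c; c, s] : Matrix (Fin 2) (Fin 2) ℝ).PosDef) :
    ((!![s, c; c, s] : Matrix (Fin 2) (Fin 2) ℝ)⁻¹ *ᵥ (fun _ => (1 : ℝ))
        = fun _ => 1 / (s + c))
    ∧ (∀ A α γg ρ : ℝ, 0 < A → 0 < α → 0 < γg → ρ ∈ Set.Icc (0 : ℝ) 1 →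
        ∀ f : (Fin 2 → ℝ) → ℝ,
        (∀ n, f n =
            ρ * ((2 * Real.sqrt π * γg) ^ 2)⁻¹ * Real.exp (-(∑ i, n i ^ 2) / (4 * γg ^ 2))
            + (1 - ρ) *
                (Real.Gamma ((α + 2) / 2) /
                  (Real.Gamma (α / 2) * (α * π) *
                    Real.sqrt (!![s, c; c, s] : Matrix (Fin 2) (Fin 2) ℝ).det)) *
                (1 + (n ⬝ᵥ ((!![s, c; c, s] : Matrix (Fin 2) (Fin 2) ℝ)⁻¹ *ᵥ n)) / α) ^
                  (-(α + 2) / 2)) →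
        {n : Fin 2 → ℝ | f (n + fun _ => 2 * A) > f n}
          = {n : Fin 2 → ℝ | n 0 + n 1 < -(2 * A)}) := by
  set S : Matrix (Fin 2) (Fin 2) ℝ := !![s, c; c, s]
  have hsc : 0 < s + c :=
    hCov.pos_of_mulVec_eq_smul (fun h => by simpa using congrFun h 0)
      (fin_two_symm_mulVec_const_one s c)
  have hinv : S⁻¹ *ᵥ (fun _ => 1) = (s + c)⁻¹ • fun _ => 1 :=
    inv_mulVec_eq_inv_smul_of_mulVec_eq_smul hCov.isUnit hsc.ne'
      (fin_two_symm_mulVec_const_one s c)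
  refine ⟨by rw [hinv]; funext; simp, fun A α γg ρ hA hα hγg hρ f hf => ?_⟩
  have hshift : (fun _ : Fin 2 => 2 * A) = (2 * A) • fun _ => 1 := by funext; simp
  ext n
  have hsq : ∑ i, (n + fun _ => 2 * A : Fin 2 → ℝ) i ^ 2
      = ∑ i, n i ^ 2 + 4 * A * (n 0 + n 1 + 2 * A) := by
    simp only [Fin.sum_univ_two, Pi.add_apply]; ring
  have hQ : (n + fun _ => 2 * A) ⬝ᵥ (S⁻¹ *ᵥ (n + fun _ => 2 * A))
      = n ⬝ᵥ (S⁻¹ *ᵥ n) + 4 * A / (s + c) * (n 0 + n 1 + 2 * A) := by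
    rw [hshift, (isHermitian_iff_isSymm.mp hCov.inv.isHermitian).dotProduct_mulVec_add_smul hinv]
    simp only [dotProduct, Fin.sum_univ_two, one_mul, mul_one]
    ring
  have hQnn (m : Fin 2 → ℝ) : 0 ≤ m ⬝ᵥ (S⁻¹ *ᵥ m) := by
    simpa using hCov.inv.posSemidef.dotProduct_mulVec_nonneg m
  simp only [Set.mem_ofPred_eq, gt_iff_lt, hf, hsq, hQ]
  refine (mixture_lt_mixture_shift_iff (strictAnti_exp_neg_div (by positivity : 0 < 4 * γg ^ 2))
    (strictAntiOn_one_add_div_rpow hα (by linarith : -(α + 2) / 2 < 0)) hρ ?_ ?_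
    (by positivity : 0 < 4 * A) (by positivity : 0 < 4 * A / (s + c)) (hQnn n) ?_).trans ?_
  · positivity
  · have := hCov.det_pos
    positivity
  · exact hQ ▸ hQnn _
  · constructor <;> intro <;> linarith
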